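/- The two convex relaxations of the TV model are equivalent: (i) if (x̂, ℓ̂, f̂, v̂) minimizes K(x, v) over all x ∈ A_{d+1}^N, ℓ, f ∈ ℝ^E, v ∈ ℝ^N with Q(x_n, x_m, v_n, v_m, f_{(n,m)}, ℓ_{(n,m)}) ⪰ 0 for all (n,m) ∈ E, then (x̂, v̂) minimizes K(x, v) over all x ∈ A_{d+1}^N, v ∈ ℝ^N with V(x_n, v_n) ⪰ 0 for all n ∈ V; (ii) conversely, if (x̂, v̂) minimizes the latter problem, then (x̂, (η(x̂_n, x̂_m))_{(n,m)∈E}, (⟨x̂_n, x̂_m⟩)_{(n,m)∈E}, v̂) minimizes the former (assuming in (i) that G is connected so every vertex lies on an edge). -/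

import Mathlib

open Finset Matrix

/-- The Minkowski bilinear form on `ℝ^{d+1}`. -/
noncomputable def minkowski {d : ℕ} (x y : Fin (d+1) → ℝ) : ℝ :=
  (∑ i : Fin d, x i.castSucc * y i.castSucc) - x (Fin.last d) * y (Fin.last d)

/-- `ξ̃ = (ξ_1, …, ξ_d, −ξ_{d+1})`. -/
def tilde {d : ℕ} (x : Fin (d+1) → ℝ) : Fin (d+1) → ℝ :=
  fun i => if i = Fin.last d then -x i else x i

/-- The symmetric `(d+5)×(d+5)` block matrix `Q`. -/
noncomputable def Qmat {d : ℕ} (xn xm : Fin (d+1) → ℝ) (vn vm f l : ℝ) :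
    Matrix (Fin (d+1+4)) (Fin (d+1+4)) ℝ :=
  Matrix.reindex finSumFinEquiv finSumFinEquiv
    (Matrix.fromBlocks 1 (Matrix.of fun i j => ![xn, tilde xn, xm, tilde xm] j i)
      (Matrix.of fun i j => ![xn, tilde xn, xm, tilde xm] i j)
      !![vn, -1, f, l; -1, vn, l, f; f, l, vm, -1; l, f, -1, vm])

/-- The symmetric `(d+3)×(d+3)` block matrix `V`. -/
noncomputable def Vmat {d : ℕ} (x : Fin (d+1) → ℝ) (v : ℝ) :
    Matrix (Fin (d+1+2)) (Fin (d+1+2)) ℝ :=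
  Matrix.reindex finSumFinEquiv finSumFinEquiv
    (Matrix.fromBlocks 1 (Matrix.of fun i j => ![x, tilde x] j i)
      (Matrix.of fun i j => ![x, tilde x] i j)
      !![v, -1; -1, v])

/-- The TV objective `K(x,v) = (1/2) Σ_{n∈V} (v_n − 2⟨x_n,y_n⟩) + μ Σ_{(n,m)∈E} ‖x_n − x_m‖₁`. -/
noncomputable def Kfun {N d : ℕ} (E : Finset (Fin N × Fin N))
    (y : Fin N → Fin (d+1) → ℝ) (mu : ℝ)
    (x : Fin N → Fin (d+1) → ℝ) (v : Fin N → ℝ) : ℝ :=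
  (1/2) * ∑ n, (v n - 2 * ∑ i, x n i * y n i)
    + mu * ∑ e ∈ E, ∑ i, |x e.1 i - x e.2 i|

/-- Feasibility for the edge-based relaxation: all `x_n ∈ A_{d+1}` and all
edge matrices `Q ⪰ 0`. -/
def FeasQ {N d : ℕ} (E : Finset (Fin N × Fin N)) (x : Fin N → Fin (d+1) → ℝ)
    (l f : Fin N × Fin N → ℝ) (v : Fin N → ℝ) : Prop :=
  (∀ n, 1 ≤ x n (Fin.last d)) ∧
    ∀ e ∈ E, (Qmat (x e.1) (x e.2) (v e.1) (v e.2) (f e) (l e)).PosSemidef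

/-- Feasibility for the vertex-based relaxation: all `x_n ∈ A_{d+1}` and all
vertex matrices `V ⪰ 0`. -/
def FeasV {N d : ℕ} (x : Fin N → Fin (d+1) → ℝ) (v : Fin N → ℝ) : Prop :=
  (∀ n, 1 ≤ x n (Fin.last d)) ∧ ∀ n, (Vmat (x n) (v n)).PosSemidef

/-!
A Schur complement with respect to the identity block turns `V(x, v) ⪰ 0` into
`|1 + η(x, x)| ≤ v - ‖x‖²`, and `Q ⪰ 0` into positive semidefiniteness of a `4 × 4` matrix whose
diagonal `2 × 2` blocks are the Schur complements of `V(xₙ, vₙ)` and `V(xₘ, vₘ)` and whose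
off-diagonal block is built from `f - ⟨xₙ, xₘ⟩` and `ℓ - η(xₙ, xₘ)`. Its principal `2 × 2` blocks
give `V ⪰ 0` at both ends of every edge, while `f = ⟨xₙ, xₘ⟩`, `ℓ = η(xₙ, xₘ)` make the matrix block
diagonal. Hence `(x, ℓ, f, v) ↦ (x, v)` maps the first feasible set onto the second, and `K` only
depends on `(x, v)`.
-/

section Tilde

variable {d : ℕ}

@[simp]
lemma tilde_castSucc (x : Fin (d+1) → ℝ) (i : Fin d) : tilde x i.castSucc = x i.castSucc :=
  if_neg (Fin.castSucc_lt_last i).ne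

@[simp]
lemma tilde_last (x : Fin (d+1) → ℝ) : tilde x (Fin.last d) = -x (Fin.last d) :=
  if_pos rfl

lemma dotProduct_tilde (x y : Fin (d+1) → ℝ) : x ⬝ᵥ tilde y = minkowski x y := by
  simp [dotProduct, minkowski, Fin.sum_univ_castSucc, sub_eq_add_neg]

lemma tilde_dotProduct (x y : Fin (d+1) → ℝ) : tilde x ⬝ᵥ y = minkowski x y := by
  simp [dotProduct, minkowski, Fin.sum_univ_castSucc, sub_eq_add_neg]

lemma minkowski_tilde_left (x y : Fin (d+1) → ℝ) : minkowski (tilde x) y = x ⬝ᵥ y := by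
  simp [dotProduct, minkowski, Fin.sum_univ_castSucc]

lemma minkowski_comm (x y : Fin (d+1) → ℝ) : minkowski x y = minkowski y x := by
  simp only [minkowski, mul_comm]

end Tilde

section BlockMatrix

variable {R : Type*} [Field R] [PartialOrder R] [StarRing R] [StarOrderedRing R] [TrivialStar R]

lemma posSemidef_reindex_fromBlocks_one_iff {m n k : Type*} [Fintype m] [DecidableEq m]
    [Fintype n] (e : m ⊕ n ≃ k) (B : Matrix n m R) (D : Matrix n n R) :
    (reindex e e (fromBlocks 1 Bᵀ B D)).PosSemidef ↔ (D - B * Bᵀ).PosSemidef := by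
  have hB : Bᵀᴴ = B := by rw [conjTranspose_eq_transpose_of_trivial, transpose_transpose]
  let : Invertible (1 : Matrix m m R) := invertibleOne
  have := PosDef.fromBlocks₁₁ Bᵀ D PosDef.one
  rwa [hB, inv_one, Matrix.mul_one, ← posSemidef_submatrix_equiv e.symm] at this

end BlockMatrix

lemma quadratic_nonneg_of_abs_le {a b : ℝ} (h : |b| ≤ a) (u v : ℝ) :
    0 ≤ a * u ^ 2 + 2 * b * u * v + a * v ^ 2 := by
  obtain ⟨h₁, h₂⟩ := abs_le.1 h
  have hab : 0 ≤ a + b := by linarith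
  have hba : 0 ≤ a - b := by linarith
  calc 0 ≤ (a + b) / 2 * (u + v) ^ 2 + (a - b) / 2 * (u - v) ^ 2 := by positivity
    _ = a * u ^ 2 + 2 * b * u * v + a * v ^ 2 := by ring

lemma posSemidef_two_iff (a b : ℝ) :
    (!![a, b; b, a] : Matrix (Fin 2) (Fin 2) ℝ).PosSemidef ↔ |b| ≤ a := by
  refine ⟨fun h => abs_le.2 ⟨?_, ?_⟩, fun h => ?_⟩
  · have := h.dotProduct_mulVec_nonneg ![1, 1]
    simp [dotProduct, mulVec, Fin.sum_univ_succ] at this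
    linarith
  · have := h.dotProduct_mulVec_nonneg ![1, -1]
    simp [dotProduct, mulVec, Fin.sum_univ_succ] at this
    linarith
  · refine PosSemidef.of_dotProduct_mulVec_nonneg ?_ fun w => ?_
    · ext i j
      fin_cases i <;> fin_cases j <;> rfl
    · have hq : star w ⬝ᵥ !![a, b; b, a] *ᵥ w = a * w 0 ^ 2 + 2 * b * w 0 * w 1 + a * w 1 ^ 2 := by
        simp [dotProduct, mulVec, Fin.sum_univ_succ]
        ring
      exact hq ▸ quadratic_nonneg_of_abs_le h _ _

lemma of_mul_transpose_of {R m n : Type*} [Fintype n] [Mul R] [AddCommMonoid R]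
    (u : m → n → R) : of u * (of u)ᵀ = of fun i j => u i ⬝ᵥ u j :=
  rfl

lemma posSemidef_vmat_iff {d : ℕ} (x : Fin (d+1) → ℝ) (v : ℝ) :
    (Vmat x v).PosSemidef ↔ |1 + minkowski x x| ≤ v - x ⬝ᵥ x := by
  have hschur : !![v, -1; -1, v] - of ![x, tilde x] * (of ![x, tilde x])ᵀ
      = !![v - x ⬝ᵥ x, -(1 + minkowski x x); -(1 + minkowski x x), v - x ⬝ᵥ x] := by
    rw [of_mul_transpose_of]
    ext i j
    fin_cases i <;> fin_cases j <;>
      simp [dotProduct_tilde, tilde_dotProduct, minkowski_tilde_left] <;>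
      ring
  rw [← abs_neg]
  exact (posSemidef_reindex_fromBlocks_one_iff finSumFinEquiv _ _).trans
    (hschur ▸ posSemidef_two_iff _ _)

def twoPairMatrix (a b c e p q : ℝ) : Matrix (Fin 4) (Fin 4) ℝ :=
  !![a, b, p, q; b, a, q, p; p, q, c, e; q, p, e, c]

lemma abs_le_of_posSemidef_twoPairMatrix {a b c e p q : ℝ}
    (h : (twoPairMatrix a b c e p q).PosSemidef) : |b| ≤ a ∧ |e| ≤ c := by
  have hab : (twoPairMatrix a b c e p q).submatrix ![0, 1] ![0, 1] = !![a, b; b, a] := by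
    ext i j; fin_cases i <;> fin_cases j <;> rfl
  have hce : (twoPairMatrix a b c e p q).submatrix ![2, 3] ![2, 3] = !![c, e; e, c] := by
    ext i j; fin_cases i <;> fin_cases j <;> rfl
  exact ⟨(posSemidef_two_iff a b).1 (hab ▸ h.submatrix _),
    (posSemidef_two_iff c e).1 (hce ▸ h.submatrix _)⟩

lemma posSemidef_twoPairMatrix_zero {a b c e : ℝ} (hab : |b| ≤ a) (hce : |e| ≤ c) :
    (twoPairMatrix a b c e 0 0).PosSemidef := by
  refine PosSemidef.of_dotProduct_mulVec_nonneg ?_ fun w => ?_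
  · ext i j
    fin_cases i <;> fin_cases j <;> rfl
  · have hq : star w ⬝ᵥ twoPairMatrix a b c e 0 0 *ᵥ w
        = (a * w 0 ^ 2 + 2 * b * w 0 * w 1 + a * w 1 ^ 2)
          + (c * w 2 ^ 2 + 2 * e * w 2 * w 3 + c * w 3 ^ 2) := by
      simp [twoPairMatrix, dotProduct, mulVec, Fin.sum_univ_succ]
      ring
    exact hq ▸ add_nonneg (quadratic_nonneg_of_abs_le hab _ _)
      (quadratic_nonneg_of_abs_le hce _ _)

section Relaxations

variable {d : ℕ}

lemma posSemidef_qmat_iff (xn xm : Fin (d+1) → ℝ) (vn vm f l : ℝ) :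
    (Qmat xn xm vn vm f l).PosSemidef ↔
      (twoPairMatrix (vn - xn ⬝ᵥ xn) (-(1 + minkowski xn xn)) (vm - xm ⬝ᵥ xm)
        (-(1 + minkowski xm xm)) (f - xn ⬝ᵥ xm) (l - minkowski xn xm)).PosSemidef := by
  have hschur : !![vn, -1, f, l; -1, vn, l, f; f, l, vm, -1; l, f, -1, vm]
      - of ![xn, tilde xn, xm, tilde xm] * (of ![xn, tilde xn, xm, tilde xm])ᵀ
      = twoPairMatrix (vn - xn ⬝ᵥ xn) (-(1 + minkowski xn xn)) (vm - xm ⬝ᵥ xm)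
        (-(1 + minkowski xm xm)) (f - xn ⬝ᵥ xm) (l - minkowski xn xm) := by
    rw [of_mul_transpose_of]
    ext i j
    fin_cases i <;> fin_cases j <;>
      simp [twoPairMatrix, dotProduct_tilde, tilde_dotProduct, minkowski_tilde_left,
        dotProduct_comm xm xn, minkowski_comm xm xn] <;>
      ring
  exact hschur ▸ posSemidef_reindex_fromBlocks_one_iff finSumFinEquiv _ _

lemma posSemidef_vmat_of_posSemidef_qmat {xn xm : Fin (d+1) → ℝ} {vn vm f l : ℝ}
    (h : (Qmat xn xm vn vm f l).PosSemidef) :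
    (Vmat xn vn).PosSemidef ∧ (Vmat xm vm).PosSemidef := by
  simpa only [posSemidef_vmat_iff, abs_neg] using
    abs_le_of_posSemidef_twoPairMatrix ((posSemidef_qmat_iff ..).1 h)

lemma posSemidef_qmat_of_posSemidef_vmat {xn xm : Fin (d+1) → ℝ} {vn vm : ℝ}
    (hn : (Vmat xn vn).PosSemidef) (hm : (Vmat xm vm).PosSemidef) :
    (Qmat xn xm vn vm (xn ⬝ᵥ xm) (minkowski xn xm)).PosSemidef := by
  rw [posSemidef_vmat_iff, ← abs_neg] at hn hm
  simpa only [posSemidef_qmat_iff, sub_self] using posSemidef_twoPairMatrix_zero hn hm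

variable {N : ℕ} {E : Finset (Fin N × Fin N)} {x : Fin N → Fin (d+1) → ℝ} {v : Fin N → ℝ}

lemma FeasQ.feasV {l f : Fin N × Fin N → ℝ}
    (hcover : ∀ n : Fin N, ∃ m : Fin N, (n, m) ∈ E ∨ (m, n) ∈ E) (h : FeasQ E x l f v) :
    FeasV x v := by
  refine ⟨h.1, fun n => ?_⟩
  obtain ⟨m, hm | hm⟩ := hcover n
  · exact (posSemidef_vmat_of_posSemidef_qmat (h.2 _ hm)).1
  · exact (posSemidef_vmat_of_posSemidef_qmat (h.2 _ hm)).2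

lemma FeasV.feasQ (h : FeasV x v) :
    FeasQ E x (fun e => minkowski (x e.1) (x e.2)) (fun e => x e.1 ⬝ᵥ x e.2) v :=
  ⟨h.1, fun e _ => posSemidef_qmat_of_posSemidef_vmat (h.2 e.1) (h.2 e.2)⟩

end Relaxations

theorem relaxed_TV_models_equivalent_general (N d : ℕ) (E : Finset (Fin N × Fin N))
    (y : Fin N → Fin (d+1) → ℝ) (mu : ℝ)
    (hconn : ∀ n : Fin N, ∃ m : Fin N, (n, m) ∈ E ∨ (m, n) ∈ E) :
    (∀ (xh : Fin N → Fin (d+1) → ℝ) (lh fh : Fin N × Fin N → ℝ) (vh : Fin N → ℝ),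
      (FeasQ E xh lh fh vh ∧
        ∀ x l f v, FeasQ E x l f v → Kfun E y mu xh vh ≤ Kfun E y mu x v) →
      (FeasV xh vh ∧ ∀ x v, FeasV x v → Kfun E y mu xh vh ≤ Kfun E y mu x v)) ∧
    (∀ (xh : Fin N → Fin (d+1) → ℝ) (vh : Fin N → ℝ),
      (FeasV xh vh ∧ ∀ x v, FeasV x v → Kfun E y mu xh vh ≤ Kfun E y mu x v) →
      (FeasQ E xh (fun e => minkowski (xh e.1) (xh e.2))
          (fun e => ∑ i, xh e.1 i * xh e.2 i) vh ∧
        ∀ x l f v, FeasQ E x l f v → Kfun E y mu xh vh ≤ Kfun E y mu x v)) := by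
  constructor
  · rintro xh lh fh vh ⟨hfeas, hmin⟩
    exact ⟨hfeas.feasV hconn, fun x v hxv => hmin x _ _ v hxv.feasQ⟩
  · rintro xh vh ⟨hfeas, hmin⟩
    exact ⟨hfeas.feasQ, fun x l f v hxv => hmin x v (hxv.feasV hconn)⟩

/-- Equivalence of the two convex relaxations of the TV model:
(i) any minimizer `(x̂, ℓ̂, f̂, v̂)` of `K` over the edge-based feasible set yields a
minimizer `(x̂, v̂)` of `K` over the vertex-based feasible set;
(ii) conversely, any minimizer `(x̂, v̂)` of the vertex-based problem yields the
minimizer `(x̂, (η(x̂_n,x̂_m))_e, (⟨x̂_n,x̂_m⟩)_e, v̂)` of the edge-based problem.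
Here every vertex is assumed to lie on an edge (`G` connected). -/
theorem relaxed_TV_models_equivalent (N d : ℕ) (E : Finset (Fin N × Fin N))
    (y : Fin N → Fin (d+1) → ℝ) (mu : ℝ) (hmu : 0 < mu)
    (hconn : ∀ n : Fin N, ∃ m : Fin N, (n, m) ∈ E ∨ (m, n) ∈ E) :
    (∀ (xh : Fin N → Fin (d+1) → ℝ) (lh fh : Fin N × Fin N → ℝ) (vh : Fin N → ℝ),
      (FeasQ E xh lh fh vh ∧
        ∀ x l f v, FeasQ E x l f v → Kfun E y mu xh vh ≤ Kfun E y mu x v) →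
      (FeasV xh vh ∧ ∀ x v, FeasV x v → Kfun E y mu xh vh ≤ Kfun E y mu x v)) ∧
    (∀ (xh : Fin N → Fin (d+1) → ℝ) (vh : Fin N → ℝ),
      (FeasV xh vh ∧ ∀ x v, FeasV x v → Kfun E y mu xh vh ≤ Kfun E y mu x v) →
      (FeasQ E xh (fun e => minkowski (xh e.1) (xh e.2))
          (fun e => ∑ i, xh e.1 i * xh e.2 i) vh ∧
        ∀ x l f v, FeasQ E x l f v → Kfun E y mu xh vh ≤ Kfun E y mu x v)) :=
  relaxed_TV_models_equivalent_general N d E y mu hconn
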